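/- With the Melnikov functions M_f and M_b defined below (via the unique root u_b(r) of K(·;r) in (6/5, 4/3)), one has M_f(r) → 1/3 and M_b(r) → −1/3 as r → ∞. -/

import Mathlib

/-!
As `r → ∞` both square roots tend to `1`, so `q₊ → 2`, `q₋ → 0`, both rates `a_f, a_b` tend to
`√2/2` and the coefficients of `∫ e^{-aχ} φ′φ` tend to `0`; moreover `M_b` is, up to sign, the
same expression as `M_f` in the back quantities. The integrals are continuous in `a` near `√2/2`
by dominated convergence, since `φ′ = φ(1 - φ)/√2` and `φ²(1 - φ)` decays fast enough on both
sides to absorb the weight `e^{-aχ}` for `0 ≤ a ≤ 1`. At `a = √2/2` the weight is `(1 - φ)/φ`,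
so the substitution `p = φ(χ)` turns the integrals into `∫₀¹ (1 - p) pⁿ dp = 1/(n+1) - 1/(n+2)`
and `∫₀¹ (1 - p)²/√2 dp = √2/6`, giving `2 · √2 · √2/6 - 4/6 + 4/12 = 1/3`.
-/

open Filter Topology MeasureTheory

noncomputable section

/-- The Nagumo front profile `φ(χ) = 1/(1 + exp(−χ/√2))`. -/
def phi (χ : ℝ) : ℝ := 1 / (1 + Real.exp (-χ / Real.sqrt 2))

/-- The cubic `K(u;r)`. -/
def Kc (u r : ℝ) : ℝ := 40*u^3 - (50*r + 169)*u^2 + (160*r + 224)*u - 120*r - 96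

/-- `q_{f,+}(r) = 1 + √(r/(r + 1/10))`. -/
def qfp (r : ℝ) : ℝ := 1 + Real.sqrt (r / (r + 1/10))

/-- `q_{f,−}(r) = 1 − √(r/(r + 1/10))`. -/
def qfm (r : ℝ) : ℝ := 1 - Real.sqrt (r / (r + 1/10))

/-- `q_{b,+}(r,u) = 1 + √((r + u − 2)/(r + 1/10))`. -/
def qbp (r u : ℝ) : ℝ := 1 + Real.sqrt ((r + u - 2) / (r + 1/10))

/-- `q_{b,−}(r,u) = 1 − √((r + u − 2)/(r + 1/10))`. -/
def qbm (r u : ℝ) : ℝ := 1 - Real.sqrt ((r + u - 2) / (r + 1/10))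

/-- The singular wave-speed parameter `μ_0(r,u)`. -/
def mu0 (r u : ℝ) : ℝ :=
  (2*(2*qbm r u - qbp r u) + u*(2*qfm r - qfp r)) /
    (qbp r u - 2*qbm r u + qfp r - 2*qfm r)

/-- The singular diffusion coefficient `D_0(r,u)`. -/
def D0 (r u : ℝ) : ℝ :=
  2*(2 - u)^2 / ((r + 1/10) * (2*qbm r u - qbp r u + 2*qfm r - qfp r)^2)

/-- Exponential rate along the front: `a_f = √2(1/2 − q_{f−}/q_{f+})`. -/
def af (r : ℝ) : ℝ := Real.sqrt 2 * (1/2 - qfm r / qfp r)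

/-- Exponential rate along the back: `a_b = √2(1/2 − q_{b−}/q_{b+})`. -/
def ab (r u : ℝ) : ℝ := Real.sqrt 2 * (1/2 - qbm r u / qbp r u)

/-- The basic Melnikov integral `∫ e^{−aχ} φ′(χ)² dχ`. -/
def Jsq (a : ℝ) : ℝ := ∫ χ : ℝ, Real.exp (-a * χ) * (deriv phi χ)^2

/-- The basic Melnikov integral `∫ e^{−aχ} φ′(χ) φ(χ)ⁿ dχ`. -/
def Jn (a : ℝ) (n : ℕ) : ℝ := ∫ χ : ℝ, Real.exp (-a * χ) * (deriv phi χ * (phi χ)^n)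

/-- The Melnikov quantity `M_f(r)` (for `∂_D Q_f`). -/
def Mf (r : ℝ) : ℝ :=
  (qfp r / 2) * Real.sqrt 2 * (qfp r - 2 * qfm r) * Jsq (af r)
    + (1 / (10 * (r + 1/10))) * Jn (af r) 1
    - 2 * qfp r * Jn (af r) 2
    + (qfp r)^2 * Jn (af r) 3

/-- The Melnikov quantity `M_b(r)` (for `∂_D Q_b`), with `u = u_b(r)`. -/
def Mb (r u : ℝ) : ℝ :=
  -(qbp r u / 2) * Real.sqrt 2 * (qbp r u - 2 * qbm r u) * Jsq (ab r u)
    + ((u - 21/10) / (r + 1/10)) * Jn (ab r u) 1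
    + 2 * qbp r u * Jn (ab r u) 2
    - (qbp r u)^2 * Jn (ab r u) 3

/-- The Melnikov quantity `M̂_f(r)` (for `∂_μ Q_f`), with `u = u_b(r)`. -/
def Mhf (r u : ℝ) : ℝ :=
  -(qfp r * D0 r u * Real.sqrt 2 * (qfp r - 2 * qfm r) / (2 * (mu0 r u + 2))) * Jsq (af r)

/-- The Melnikov quantity `M̂_b(r)` (for `∂_μ Q_b`), with `u = u_b(r)`. -/
def Mhb (r u : ℝ) : ℝ :=
  -(qbp r u * Real.sqrt 2 * (qbp r u - 2 * qbm r u) / (2 * (mu0 r u + u))) * Jsq (ab r u)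

/-- The Melnikov quantity `M̃_f(r)` (for `∂_u 𝒬_f`), with `u = u_b(r)`. -/
def Mtf (r u : ℝ) : ℝ :=
  -(qfp r) * Real.sqrt ((r + 1/10) / D0 r u) * Jsq (af r) + Jn (af r) 1

/-- The nondegeneracy quantity `M̂(r) = M_b/M̂_b − M_f/M̂_f`, with `u = u_b(r)`. -/
def Mhat (r u : ℝ) : ℝ := Mb r u / Mhb r u - Mf r / Mhf r u

open Real Set

lemma phi_eq_inv (χ : ℝ) : phi χ = (1 + exp (-χ / √2))⁻¹ := one_div _

lemma phi_pos (χ : ℝ) : 0 < phi χ := by rw [phi_eq_inv]; positivity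

lemma phi_le_one (χ : ℝ) : phi χ ≤ 1 := by
  rw [phi_eq_inv]; exact inv_le_one_of_one_le₀ (by linarith [exp_pos (-χ / √2)])

lemma one_sub_phi_nonneg (χ : ℝ) : 0 ≤ 1 - phi χ := sub_nonneg.2 (phi_le_one χ)

lemma exp_neg_div_sqrt_two_mul_phi (χ : ℝ) : exp (-χ / √2) * phi χ = 1 - phi χ := by
  rw [phi_eq_inv]; field_simp; ring

lemma hasDerivAt_phi (χ : ℝ) : HasDerivAt phi (phi χ * (1 - phi χ) / √2) χ := by
  have hE : HasDerivAt (fun χ => 1 + exp (-χ / √2)) (exp (-χ / √2) * (-1 / √2)) χ :=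
    (((hasDerivAt_id' χ).neg.div_const √2).exp).const_add 1
  rw [← exp_neg_div_sqrt_two_mul_phi, funext phi_eq_inv]
  refine (hE.inv (by positivity)).congr_deriv ?_
  field_simp

lemma deriv_phi (χ : ℝ) : deriv phi χ = phi χ * (1 - phi χ) / √2 := (hasDerivAt_phi χ).deriv

lemma continuous_phi : Continuous phi :=
  continuous_iff_continuousAt.2 fun χ => (hasDerivAt_phi χ).continuousAt

lemma tendsto_phi_atBot : Tendsto phi atBot (𝓝 0) := by
  rw [funext phi_eq_inv]
  refine tendsto_inv_atTop_zero.comp (tendsto_atTop_add_const_left _ 1 ?_)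
  exact tendsto_exp_atTop.comp (tendsto_neg_atBot_atTop.atTop_div_const (by positivity))

lemma tendsto_phi_atTop : Tendsto phi atTop (𝓝 1) := by
  rw [funext phi_eq_inv]
  have := ((tendsto_exp_atBot.comp (tendsto_neg_atTop_atBot.atBot_div_const
    (by positivity : (0:ℝ) < √2))).const_add 1).inv₀ (by norm_num)
  simpa using this

lemma phi_le_exp (χ : ℝ) : phi χ ≤ exp (χ / √2) := by
  rw [phi_eq_inv, show χ / √2 = -(-χ / √2) by ring, exp_neg]
  exact inv_anti₀ (exp_pos _) (by linarith)

lemma one_sub_phi_le_exp (χ : ℝ) : 1 - phi χ ≤ exp (-χ / √2) := by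
  rw [← exp_neg_div_sqrt_two_mul_phi]
  exact mul_le_of_le_one_right (exp_pos _).le (phi_le_one χ)

lemma integrable_exp_neg_mul_abs {b : ℝ} (hb : 0 < b) :
    Integrable fun x : ℝ => exp (-b * |x|) := by
  have hIic : IntegrableOn (fun x : ℝ => exp (-b * |x|)) (Iic 0) :=
    (integrableOn_exp_mul_Iic hb 0).congr_fun
      (fun x (hx : x ≤ 0) => by simp only [abs_of_nonpos hx]; ring_nf) measurableSet_Iic
  have hIoi : IntegrableOn (fun x : ℝ => exp (-b * |x|)) (Ioi 0) :=
    (integrableOn_exp_mul_Ioi (neg_lt_zero.2 hb) 0).congr_fun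
      (fun x (hx : 0 < x) => by simp only [abs_of_pos hx]) measurableSet_Ioi
  simpa [← integrableOn_univ] using hIic.union hIoi

lemma phi_mul_one_sub_phi_le (χ : ℝ) : phi χ * (1 - phi χ) ≤ exp (-(√2)⁻¹ * |χ|) := by
  have h1 := one_sub_phi_nonneg χ
  rcases le_total 0 χ with hχ | hχ
  · calc phi χ * (1 - phi χ) ≤ 1 * exp (-χ / √2) :=
          mul_le_mul (phi_le_one χ) (one_sub_phi_le_exp χ) h1 zero_le_one
      _ = exp (-(√2)⁻¹ * |χ|) := by rw [abs_of_nonneg hχ]; ring_nf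
  · calc phi χ * (1 - phi χ) ≤ exp (χ / √2) * 1 :=
          mul_le_mul (phi_le_exp χ) (sub_le_self _ (phi_pos χ).le) h1 (exp_pos _).le
      _ = exp (-(√2)⁻¹ * |χ|) := by rw [abs_of_nonpos hχ]; ring_nf

lemma continuous_deriv_phi : Continuous (deriv phi) := by
  rw [funext deriv_phi]
  exact (continuous_phi.mul (continuous_const.sub continuous_phi)).div_const _

lemma integrable_deriv_phi : Integrable (deriv phi) := by
  refine (integrable_exp_neg_mul_abs (inv_pos.2 (sqrt_pos.2 two_pos))).mono'
    continuous_deriv_phi.aestronglyMeasurable (ae_of_all _ fun χ => ?_)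
  have h := mul_nonneg (phi_pos χ).le (one_sub_phi_nonneg χ)
  rw [deriv_phi, norm_div, norm_of_nonneg h, norm_of_nonneg (sqrt_nonneg 2)]
  exact (div_le_self h one_lt_sqrt_two.le).trans (phi_mul_one_sub_phi_le χ)

lemma div_sqrt_two (x : ℝ) : x / √2 = √2 / 2 * x := by
  field_simp; rw [sq_sqrt zero_le_two]

lemma exp_neg_mul_mul_phi_sq_mul_one_sub_le {a : ℝ} (ha : a ∈ Icc 0 1) (χ : ℝ) :
    exp (-a * χ) * (phi χ ^ 2 * (1 - phi χ)) ≤ exp (-(√2 - 1) * |χ|) := by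
  have hφ := (phi_pos χ).le
  have hφ1 := phi_le_one χ
  have h1 := one_sub_phi_nonneg χ
  have hs := sqrt_two_lt_three_halves
  rcases le_total 0 χ with hχ | hχ
  · have h2 := one_sub_phi_le_exp χ
    calc exp (-a * χ) * (phi χ ^ 2 * (1 - phi χ)) ≤ exp (-a * χ) * (1 ^ 2 * exp (-χ / √2)) := by
          gcongr
      _ = exp (-a * χ - √2 / 2 * χ) := by rw [one_pow, one_mul, ← exp_add, div_sqrt_two]; ring_nf
      _ ≤ exp (-(√2 - 1) * |χ|) := by
          rw [exp_le_exp, abs_of_nonneg hχ]; nlinarith [mul_nonneg ha.1 hχ]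
  · have h2 := phi_le_exp χ
    calc exp (-a * χ) * (phi χ ^ 2 * (1 - phi χ)) ≤ exp (-a * χ) * (exp (χ / √2) ^ 2 * 1) := by
          gcongr; linarith
      _ = exp (-a * χ + √2 * χ) := by
          rw [mul_one, ← exp_nat_mul, ← exp_add, div_sqrt_two]; push_cast; ring_nf
      _ ≤ exp (-(√2 - 1) * |χ|) := by
          rw [exp_le_exp, abs_of_nonpos hχ]; nlinarith [ha.2]

lemma continuousAt_integral_exp_neg_mul {h : ℝ → ℝ} (hc : Continuous h)
    (hh : ∀ χ, |h χ| ≤ phi χ ^ 2 * (1 - phi χ)) {a₀ : ℝ} (ha₀ : a₀ ∈ Ioo 0 1) :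
    ContinuousAt (fun a => ∫ χ, exp (-a * χ) * h χ) a₀ := by
  refine continuousAt_of_dominated (bound := fun χ => exp (-(√2 - 1) * |χ|))
    (Eventually.of_forall fun a => by fun_prop) ?_
    (integrable_exp_neg_mul_abs (sub_pos.2 one_lt_sqrt_two)) (ae_of_all _ fun χ => by fun_prop)
  filter_upwards [Ioo_mem_nhds ha₀.1 ha₀.2] with a ha
  refine ae_of_all _ fun χ => ?_
  rw [norm_mul, norm_of_nonneg (exp_pos _).le, Real.norm_eq_abs]
  exact (mul_le_mul_of_nonneg_left (hh χ) (exp_pos _).le).trans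
    (exp_neg_mul_mul_phi_sq_mul_one_sub_le (Ioo_subset_Icc_self ha) χ)

lemma abs_deriv_phi_mul_pow_le {n : ℕ} (hn : n ≠ 0) (χ : ℝ) :
    |deriv phi χ * phi χ ^ n| ≤ phi χ ^ 2 * (1 - phi χ) := by
  have hφ := (phi_pos χ).le
  have h1 := one_sub_phi_nonneg χ
  rw [deriv_phi, abs_of_nonneg (by positivity)]
  calc phi χ * (1 - phi χ) / √2 * phi χ ^ n ≤ phi χ * (1 - phi χ) * phi χ := by
        gcongr
        · exact div_le_self (by positivity) one_lt_sqrt_two.le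
        · exact pow_le_of_le_one hφ (phi_le_one χ) hn
    _ = phi χ ^ 2 * (1 - phi χ) := by ring

lemma abs_deriv_phi_sq_le (χ : ℝ) : |deriv phi χ ^ 2| ≤ phi χ ^ 2 * (1 - phi χ) := by
  have hφ := (phi_pos χ).le
  have h1 := one_sub_phi_nonneg χ
  rw [abs_of_nonneg (sq_nonneg _), deriv_phi, div_pow, sq_sqrt zero_le_two, mul_pow]
  nlinarith [phi_le_one χ, mul_nonneg (mul_nonneg (sq_nonneg (phi χ)) h1) hφ]

lemma continuousAt_Jn {n : ℕ} (hn : n ≠ 0) {a₀ : ℝ} (ha₀ : a₀ ∈ Ioo 0 1) :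
    ContinuousAt (fun a => Jn a n) a₀ :=
  continuousAt_integral_exp_neg_mul (continuous_deriv_phi.mul (continuous_phi.pow n))
    (abs_deriv_phi_mul_pow_le hn) ha₀

lemma continuousAt_Jsq {a₀ : ℝ} (ha₀ : a₀ ∈ Ioo 0 1) : ContinuousAt Jsq a₀ :=
  continuousAt_integral_exp_neg_mul (continuous_deriv_phi.pow 2) abs_deriv_phi_sq_le ha₀

theorem integral_comp_phi_mul_deriv {g : ℝ → ℝ} (hg : Continuous g) :
    ∫ χ, g (phi χ) * deriv phi χ = ∫ p in (0:ℝ)..1, g p := by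
  set G : ℝ → ℝ := fun p => ∫ t in (0:ℝ)..p, g t
  have hG : ∀ p, HasDerivAt G (g p) p := fun p => (hg.integral_hasStrictDerivAt 0 p).hasDerivAt
  have hGc : Continuous G := continuous_iff_continuousAt.2 fun p => (hG p).continuousAt
  obtain ⟨C, hC⟩ := (isCompact_Icc (a := (0:ℝ)) (b := 1)).exists_bound_of_continuousOn
    hg.continuousOn
  have hint : Integrable fun χ => g (phi χ) * deriv phi χ :=
    integrable_deriv_phi.bdd_mul (hg.comp continuous_phi).aestronglyMeasurable
      (ae_of_all _ fun χ => hC _ ⟨(phi_pos χ).le, phi_le_one χ⟩)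
  have h := integral_of_hasDerivAt_of_tendsto
    (fun χ => (deriv_phi χ ▸ (hG (phi χ)).comp χ (hasDerivAt_phi χ))) hint
    ((hGc.tendsto 0).comp tendsto_phi_atBot) ((hGc.tendsto 1).comp tendsto_phi_atTop)
  simpa [G] using h

lemma exp_neg_sqrt_two_div_two_mul_mul_phi (χ : ℝ) :
    exp (-(√2 / 2) * χ) * phi χ = 1 - phi χ := by
  rw [← exp_neg_div_sqrt_two_mul_phi, neg_div, div_sqrt_two, neg_mul]

lemma Jn_sqrt_two_div_two (n : ℕ) : Jn (√2 / 2) (n + 1) = 1 / (n + 1) - 1 / (n + 2) := by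
  have h : ∀ χ, exp (-(√2 / 2) * χ) * (deriv phi χ * phi χ ^ (n + 1))
      = (1 - phi χ) * phi χ ^ n * deriv phi χ := fun χ => by
    rw [← exp_neg_sqrt_two_div_two_mul_mul_phi]; ring
  rw [Jn, funext h, integral_comp_phi_mul_deriv (g := fun p => (1 - p) * p ^ n) (by fun_prop)]
  simp only [sub_mul, one_mul, ← pow_succ']
  rw [intervalIntegral.integral_sub (intervalIntegral.intervalIntegrable_pow _)
    (intervalIntegral.intervalIntegrable_pow _), integral_pow, integral_pow]
  norm_num
  ring

lemma Jsq_sqrt_two_div_two : Jsq (√2 / 2) = √2 / 6 := by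
  have h : ∀ χ, exp (-(√2 / 2) * χ) * deriv phi χ ^ 2
      = (1 - phi χ) ^ 2 / √2 * deriv phi χ := fun χ => by
    nth_rw 1 [sq, deriv_phi]
    rw [← exp_neg_sqrt_two_div_two_mul_mul_phi]; ring
  rw [Jsq, funext h, integral_comp_phi_mul_deriv (g := fun p => (1 - p) ^ 2 / √2) (by fun_prop),
    intervalIntegral.integral_div, intervalIntegral.integral_comp_sub_left (fun x => x ^ 2),
    integral_pow, div_sqrt_two]
  ring

def decayRate (s : ℝ) : ℝ := √2 * (1 / 2 - (1 - s) / (1 + s))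

def melnikovFront (s c : ℝ) : ℝ :=
  (1 + s) / 2 * √2 * ((1 + s) - 2 * (1 - s)) * Jsq (decayRate s)
    + c * Jn (decayRate s) 1
    - 2 * (1 + s) * Jn (decayRate s) 2
    + (1 + s) ^ 2 * Jn (decayRate s) 3

lemma Mf_eq_melnikovFront (r : ℝ) :
    Mf r = melnikovFront √(r / (r + 1/10)) (1 / (10 * (r + 1/10))) := rfl

lemma Mb_eq_neg_melnikovFront (r u : ℝ) :
    Mb r u = -melnikovFront √((r + u - 2) / (r + 1/10)) (-((u - 21/10) / (r + 1/10))) := by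
  simp only [Mb, melnikovFront, qbp, qbm, ab, decayRate]; ring

lemma sqrt_two_div_two_mem_Ioo : √2 / 2 ∈ Ioo (0:ℝ) 1 :=
  ⟨by positivity, by linarith [sqrt_two_lt_three_halves]⟩

theorem tendsto_melnikovFront {ι : Type*} {l : Filter ι} {s c : ι → ℝ}
    (hs : Tendsto s l (𝓝 1)) (hc : Tendsto c l (𝓝 0)) :
    Tendsto (fun i => melnikovFront (s i) (c i)) l (𝓝 (1 / 3)) := by
  have hrate : Tendsto (fun i => decayRate (s i)) l (𝓝 (√2 / 2)) := by
    have := ((hs.const_sub 1).div (hs.const_add 1) (by norm_num)).const_sub (1 / 2) |>.const_mul √2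
    simpa [decayRate, div_eq_mul_inv] using this
  have hJsq := Jsq_sqrt_two_div_two ▸ (continuousAt_Jsq sqrt_two_div_two_mem_Ioo).tendsto.comp hrate
  have hJ (n : ℕ) : Tendsto (fun i => Jn (decayRate (s i)) (n + 1)) l
      (𝓝 (1 / (n + 1) - 1 / (n + 2))) :=
    Jn_sqrt_two_div_two n ▸
      (continuousAt_Jn n.succ_ne_zero sqrt_two_div_two_mem_Ioo).tendsto.comp hrate
  have hq := hs.const_add 1
  have := ((((hq.div_const 2).mul_const √2).mul (hq.sub ((hs.const_sub 1).const_mul 2))).mul hJsq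
    |>.add (hc.mul (hJ 0))).sub ((hq.const_mul 2).mul (hJ 1)) |>.add ((hq.pow 2).mul (hJ 2))
  convert this using 2
  · rfl
  push_cast
  linear_combination (-1 / 3) * sq_sqrt (zero_le_two : (0:ℝ) ≤ 2)

lemma tendsto_div_add_atTop_zero {c : ℝ → ℝ} (hc : IsBoundedUnder (· ≤ ·) atTop (norm ∘ c))
    (d : ℝ) : Tendsto (fun r => c r / (r + d)) atTop (𝓝 0) := by
  simpa [div_eq_inv_mul] using (tendsto_inv_atTop_zero.comp
    (tendsto_atTop_add_const_right _ d tendsto_id)).zero_mul_isBoundedUnder_le hc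

lemma tendsto_sqrt_of_eventuallyEq_one_add {α : Type*} {l : Filter α} {f k : α → ℝ}
    (hk : Tendsto k l (𝓝 0)) (hf : f =ᶠ[l] fun x => 1 + k x) :
    Tendsto (fun x => √(f x)) l (𝓝 1) := by
  simpa using ((hk.const_add 1).congr' hf.symm).sqrt

theorem stmt15 (ub : ℝ → ℝ)
    (hub : ∀ r : ℝ, 2/3 < r → ub r ∈ Set.Ioo (6/5 : ℝ) (4/3) ∧ Kc (ub r) r = 0) :
    Tendsto (fun r => Mf r) atTop (nhds (1/3)) ∧
    Tendsto (fun r => Mb r (ub r)) atTop (nhds (-1/3)) := by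
  have hcf : Tendsto (fun r : ℝ => 1 / (10 * (r + 1/10))) atTop (𝓝 0) :=
    tendsto_const_nhds.div_atTop
      ((tendsto_atTop_add_const_right _ _ tendsto_id).const_mul_atTop (by norm_num))
  have hcb : Tendsto (fun r => (ub r - 21/10) / (r + 1/10)) atTop (𝓝 0) := by
    refine tendsto_div_add_atTop_zero (isBoundedUnder_of_eventually_le (a := 1) ?_) _
    filter_upwards [eventually_gt_atTop (2/3)] with r hr
    obtain ⟨⟨h1, h2⟩, -⟩ := hub r hr
    simp only [Function.comp_apply, norm_eq_abs, abs_le]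
    constructor <;> linarith
  constructor
  · rw [funext Mf_eq_melnikovFront]
    refine tendsto_melnikovFront
      (tendsto_sqrt_of_eventuallyEq_one_add (by simpa using hcf.neg) ?_) hcf
    filter_upwards [eventually_gt_atTop 0] with r hr
    field_simp
    ring
  · rw [funext fun r => Mb_eq_neg_melnikovFront r (ub r), neg_div]
    refine (tendsto_melnikovFront (tendsto_sqrt_of_eventuallyEq_one_add hcb ?_)
      (by simpa using hcb.neg)).neg
    filter_upwards [eventually_gt_atTop 0] with r hr
    field_simp
    ring
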